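/- arXiv:2108.07512 — 4 statements merged into one kernel-verified Lean document; each statement's English description precedes it below -/
import Mathlib

section
/- Let G be a topological group acting continuously on topological spaces X and Y, and let f : Y → X be a continuous G-equivariant map (f(g • y) = g • f(y) for all g ∈ G, y ∈ Y). Let x₀ ∈ X, let U be an open neighborhood of x₀, and let s : U → G be a continuous map with s(x) • x₀ = x for all x ∈ U. Then the map (x, y) ↦ s(x) • y is a homeomorphism from U × f⁻¹({x₀}) (product of subspace topologies) onto f⁻¹(U) (subspace topology), and composing it with f gives the projection (x, y) ↦ x. -/
/-! The inverse of `(x, y) ↦ s x • y` is `z ↦ (f z, (s (f z))⁻¹ • z)`: equivariance and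
`s x • x₀ = x` put `(s (f z))⁻¹ • z` in the fibre over `x₀`, and both maps are built from `f`, `s`,
inversion and the action, hence continuous. -/

namespace MulAction

section Equiv

variable {G X Y : Type*} [Group G] [MulAction G X] [MulAction G Y]
  {f : Y → X} {x₀ : X} {U : Set X} {s : U → G}

theorem apply_smul_eq_of_mem_fiber (hequiv : ∀ (g : G) (y : Y), f (g • y) = g • f y)
    (hsec : ∀ x : U, s x • x₀ = (x : X)) (x : U) (y : f ⁻¹' {x₀}) :
    f (s x • (y : Y)) = x := by
  rw [hequiv, y.2, hsec]

theorem inv_smul_mem_fiber (hequiv : ∀ (g : G) (y : Y), f (g • y) = g • f y)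
    (hsec : ∀ x : U, s x • x₀ = (x : X)) (z : f ⁻¹' U) :
    (s ⟨f z, z.2⟩)⁻¹ • (z : Y) ∈ f ⁻¹' {x₀} := by
  rw [Set.mem_preimage, hequiv, Set.mem_singleton_iff, inv_smul_eq_iff, hsec]

def sectionTrivialization (hequiv : ∀ (g : G) (y : Y), f (g • y) = g • f y)
    (hsec : ∀ x : U, s x • x₀ = (x : X)) : U × (f ⁻¹' {x₀}) ≃ f ⁻¹' U where
  toFun p := ⟨s p.1 • (p.2 : Y), by
    simpa only [Set.mem_preimage, apply_smul_eq_of_mem_fiber hequiv hsec] using p.1.2⟩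
  invFun z := (⟨f z, z.2⟩, ⟨_, inv_smul_mem_fiber hequiv hsec z⟩)
  left_inv := by
    rintro ⟨x, y⟩
    have hx := apply_smul_eq_of_mem_fiber hequiv hsec x y
    refine Prod.ext (Subtype.ext hx) (Subtype.ext ?_)
    simp only [hx, inv_smul_smul]
  right_inv z := Subtype.ext (smul_inv_smul _ _)

end Equiv

variable {G X Y : Type*} [Group G] [TopologicalSpace G] [ContinuousInv G]
  [TopologicalSpace X] [MulAction G X]
  [TopologicalSpace Y] [MulAction G Y] [ContinuousSMul G Y]
  {f : Y → X} {x₀ : X} {U : Set X} {s : U → G}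

def sectionTrivializationHomeomorph (hf : Continuous f) (hs : Continuous s)
    (hequiv : ∀ (g : G) (y : Y), f (g • y) = g • f y) (hsec : ∀ x : U, s x • x₀ = (x : X)) :
    U × (f ⁻¹' {x₀}) ≃ₜ f ⁻¹' U where
  toEquiv := sectionTrivialization hequiv hsec
  continuous_toFun := ((hs.comp continuous_fst).smul
    (continuous_subtype_val.comp continuous_snd)).subtype_mk _
  continuous_invFun := by
    have hbase : Continuous fun z : f ⁻¹' U => (⟨f z, z.2⟩ : U) :=
      (hf.comp continuous_subtype_val).subtype_mk _
    exact hbase.prodMk (((hs.comp hbase).inv.smul continuous_subtype_val).subtype_mk _)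

end MulAction

theorem equivariant_map_locally_trivial_general
    {G X Y : Type*} [Group G] [TopologicalSpace G] [IsTopologicalGroup G]
    [TopologicalSpace X] [MulAction G X]
    [TopologicalSpace Y] [MulAction G Y] [ContinuousSMul G Y]
    (f : Y → X) (hf : Continuous f)
    (hequiv : ∀ (g : G) (y : Y), f (g • y) = g • f y)
    (x₀ : X) (U : Set X)
    (s : U → G) (hs : Continuous s) (hsec : ∀ x : U, s x • x₀ = (x : X)) :
    ∃ Φ : (U × (f ⁻¹' {x₀})) ≃ₜ (f ⁻¹' U),
      (∀ (x : U) (y : f ⁻¹' {x₀}), (Φ (x, y) : Y) = s x • (y : Y)) ∧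
      (∀ (x : U) (y : f ⁻¹' {x₀}), f (Φ (x, y) : Y) = (x : X)) :=
  ⟨MulAction.sectionTrivializationHomeomorph hf hs hequiv hsec, fun _ _ => rfl,
    MulAction.apply_smul_eq_of_mem_fiber hequiv hsec⟩

/-- Palais: if the action of `G` on `X` admits a local cross-section `s` on a
neighborhood `U` of `x₀`, then any continuous `G`-equivariant map `f : Y → X`
is trivial over `U`: `(x, y) ↦ s x • y` is a homeomorphism
`U × f⁻¹({x₀}) ≃ₜ f⁻¹(U)` over `U`. -/
theorem equivariant_map_locally_trivial
    {G X Y : Type*} [Group G] [TopologicalSpace G] [IsTopologicalGroup G]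
    [TopologicalSpace X] [MulAction G X] [ContinuousSMul G X]
    [TopologicalSpace Y] [MulAction G Y] [ContinuousSMul G Y]
    (f : Y → X) (hf : Continuous f)
    (hequiv : ∀ (g : G) (y : Y), f (g • y) = g • f y)
    (x₀ : X) (U : Set X) (hU : IsOpen U) (hx₀ : x₀ ∈ U)
    (s : U → G) (hs : Continuous s) (hsec : ∀ x : U, s x • x₀ = (x : X)) :
    ∃ Φ : (U × (f ⁻¹' {x₀})) ≃ₜ (f ⁻¹' U),
      (∀ (x : U) (y : f ⁻¹' {x₀}), (Φ (x, y) : Y) = s x • (y : Y)) ∧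
      (∀ (x : U) (y : f ⁻¹' {x₀}), f (Φ (x, y) : Y) = (x : X)) :=
  equivariant_map_locally_trivial_general f hf hequiv x₀ U s hs hsec
end

section
/- Let n ≥ 1, let 0 = t₀ < t₁ < ⋯ < t_n = 1 and 0 = s₀ < s₁ < ⋯ < s_n = 1 be partitions of [0,1], and let f, g : [0,1] → ℝ be continuous functions such that for each i ∈ {1,…,n}, f is strictly monotone on [t_{i−1}, t_i] and g is strictly monotone on [s_{i−1}, s_i], and f(t_i) = g(s_i) for all i ∈ {0,…,n}. Then there exists a strictly increasing continuous bijection φ : [0,1] → [0,1] (hence a homeomorphism) such that φ(s_i) = t_i for all i and f(φ(x)) = g(x) for all x ∈ [0,1]. -/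
/-!
On corresponding pieces `[sᵢ, sᵢ₊₁]` and `[tᵢ, tᵢ₊₁]` the functions `g` and `f` run through the same
interval of values in the same direction (the endpoint values agree), so `φ x` is forced to be the
unique point of `[tᵢ, tᵢ₊₁]` with `f (φ x) = g x`; the intermediate value theorem gives existence,
and at a common endpoint of two pieces both choices are the partition point. The relation
"`y` corresponds to `x`" is strictly increasing in both variables and total on both sides, so it
is the graph of a strictly increasing bijection of `[0,1]`, which is then automatically continuous.
-/

open Set

variable {α β γ : Type*}

section Order

variable [LinearOrder α] [LinearOrder β]

theorem exists_strictMonoOn_bijOn_of_rel [Nonempty β] {R : α → β → Prop} {A : Set α} {B : Set β}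
    (hR : ∀ ⦃x₁ y₁ x₂ y₂⦄, R x₁ y₁ → R x₂ y₂ → (x₁ < x₂ ↔ y₁ < y₂))
    (hA : ∀ x ∈ A, ∃ y ∈ B, R x y) (hB : ∀ y ∈ B, ∃ x ∈ A, R x y) :
    ∃ φ : α → β, StrictMonoOn φ A ∧ BijOn φ A B ∧ ∀ x ∈ A, ∀ y, R x y ↔ φ x = y := by
  have huniq : ∀ ⦃x y₁ y₂⦄, R x y₁ → R x y₂ → y₁ = y₂ := by
    intro x y₁ y₂ h₁ h₂
    by_contra hne
    rcases lt_or_gt_of_ne hne with h | h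
    · exact lt_irrefl x ((hR h₁ h₂).2 h)
    · exact lt_irrefl x ((hR h₂ h₁).2 h)
  choose! φ hφB hφR using hA
  have hmono : StrictMonoOn φ A := fun x₁ hx₁ x₂ hx₂ h => (hR (hφR x₁ hx₁) (hφR x₂ hx₂)).1 h
  refine ⟨φ, hmono, ⟨hφB, hmono.injOn, fun y hy => ?_⟩,
    fun x hx y => ⟨fun h => huniq (hφR x hx) h, fun h => h ▸ hφR x hx⟩⟩
  obtain ⟨x, hx, h⟩ := hB y hy
  exact ⟨x, hx, huniq (hφR x hx) h⟩

variable [Preorder γ]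

def SameStrictMonotonicity (f : α → γ) (A : Set α) (g : β → γ) (B : Set β) : Prop :=
  StrictMonoOn f A ∧ StrictMonoOn g B ∨ StrictAntiOn f A ∧ StrictAntiOn g B

variable {f : α → γ} {g : β → γ} {A : Set α} {B : Set β}

theorem SameStrictMonotonicity.symm (h : SameStrictMonotonicity f A g B) :
    SameStrictMonotonicity g B f A :=
  h.imp And.symm And.symm

theorem SameStrictMonotonicity.lt_of_lt (h : SameStrictMonotonicity f A g B)
    {y₁ y₂ : α} {x₁ x₂ : β} (hy₁ : y₁ ∈ A) (hy₂ : y₂ ∈ A) (hx₁ : x₁ ∈ B) (hx₂ : x₂ ∈ B)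
    (e₁ : f y₁ = g x₁) (e₂ : f y₂ = g x₂) (hx : x₁ < x₂) : y₁ < y₂ := by
  rcases h with ⟨hf, hg⟩ | ⟨hf, hg⟩
  · rw [← hf.lt_iff_lt hy₁ hy₂, e₁, e₂]
    exact hg hx₁ hx₂ hx
  · rw [← hf.lt_iff_gt hy₂ hy₁, e₂, e₁]
    exact hg hx₁ hx₂ hx

theorem sameStrictMonotonicity_Icc {a b : α} {c d : β} (hab : a < b) (hcd : c < d)
    (hf : StrictMonoOn f (Icc a b) ∨ StrictAntiOn f (Icc a b))
    (hg : StrictMonoOn g (Icc c d) ∨ StrictAntiOn g (Icc c d))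
    (ha : f a = g c) (hb : f b = g d) : SameStrictMonotonicity f (Icc a b) g (Icc c d) := by
  have ma := left_mem_Icc.2 hab.le
  have mb := right_mem_Icc.2 hab.le
  have mc := left_mem_Icc.2 hcd.le
  have md := right_mem_Icc.2 hcd.le
  rcases hf with hf | hf <;> rcases hg with hg | hg
  · exact Or.inl ⟨hf, hg⟩
  · exact (lt_asymm (hf ma mb hab) (by rw [ha, hb]; exact hg mc md hcd)).elim
  · exact (lt_asymm (hf ma mb hab) (by rw [ha, hb]; exact hg mc md hcd)).elim
  · exact Or.inr ⟨hf, hg⟩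

end Order

section Partition

variable {n : ℕ} {t : ℕ → α}

theorem exists_lt_mem_Icc_succ [LinearOrder α] {x : α} :
    ∀ {n : ℕ}, 0 < n → x ∈ Icc (t 0) (t n) → ∃ i < n, x ∈ Icc (t i) (t (i + 1))
  | 0, hn, _ => absurd hn (lt_irrefl 0)
  | n + 1, _, hx => by
    rcases Nat.eq_zero_or_pos n with rfl | hn
    · exact ⟨0, Nat.zero_lt_one, hx⟩
    by_cases hxn : x ≤ t n
    · obtain ⟨i, hi, hxi⟩ := exists_lt_mem_Icc_succ hn ⟨hx.1, hxn⟩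
      exact ⟨i, hi.trans n.lt_succ_self, hxi⟩
    · exact ⟨n, n.lt_succ_self, (not_le.1 hxn).le, hx.2⟩

theorem MonotoneOn.apply_le_succ_of_lt [Preorder α] (ht : MonotoneOn t (Iic n)) {i : ℕ}
    (hi : i < n) : t i ≤ t (i + 1) :=
  ht (mem_Iic.2 hi.le) (mem_Iic.2 hi) i.le_succ

theorem Icc_subset_Icc_zero_of_le [Preorder α] {i j : ℕ} (ht : MonotoneOn t (Iic n)) (hij : i ≤ j)
    (hj : j ≤ n) : Icc (t i) (t j) ⊆ Icc (t 0) (t n) :=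
  Icc_subset_Icc (ht (mem_Iic.2 (Nat.zero_le _)) (mem_Iic.2 (hij.trans hj)) (Nat.zero_le _))
    (ht (mem_Iic.2 hj) (mem_Iic.2 le_rfl) hj)

end Partition

section Topology

variable [LinearOrder α] [TopologicalSpace α] [OrderTopology α]
  [LinearOrder β] [TopologicalSpace β] [OrderTopology β]

theorem StrictMonoOn.continuousOn_of_surjOn {φ : α → β} {A : Set α} {B : Set β}
    [A.OrdConnected] [B.OrdConnected] (hφ : StrictMonoOn φ A) (hmaps : MapsTo φ A B)
    (hsurj : SurjOn φ A B) : ContinuousOn φ A := by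
  rw [continuousOn_iff_continuous_domRestrict]
  let e := StrictMono.orderIsoOfSurjective hmaps.restrict (fun x y h => hφ x.2 y.2 h)
    (hmaps.restrict_surjective_iff.2 hsurj)
  exact continuous_subtype_val.comp e.continuous

end Topology

theorem exists_eq_of_mem_Icc [ConditionallyCompleteLinearOrder α] [TopologicalSpace α]
    [OrderTopology α] [DenselyOrdered α] [LinearOrder β]
    [LinearOrder γ] [TopologicalSpace γ] [OrderClosedTopology γ]
    {f : α → γ} {g : β → γ} {a b : α} {c d : β} {x : β} (hab : a ≤ b)
    (hf : ContinuousOn f (Icc a b)) (hg : MonotoneOn g (Icc c d) ∨ AntitoneOn g (Icc c d))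
    (ha : f a = g c) (hb : f b = g d) (hx : x ∈ Icc c d) : ∃ y ∈ Icc a b, f y = g x := by
  have hc := left_mem_Icc.2 (hx.1.trans hx.2)
  have hd := right_mem_Icc.2 (hx.1.trans hx.2)
  have hgx : g x ∈ uIcc (f a) (f b) := by
    rw [ha, hb]
    rcases hg with hg | hg
    · exact Icc_subset_uIcc ⟨hg hc hx hx.1, hg hx hd hx.2⟩
    · exact Icc_subset_uIcc' ⟨hg hx hd hx.2, hg hc hx hx.1⟩
  rw [← uIcc_of_le hab] at hf ⊢
  exact intermediate_value_uIcc hf hgx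

-- The graph of the reparametrization `φ^{f,π}`, with `x` in the domain of `g` and `y = φ x`.
def PieceMatch [Preorder α] [Preorder β] (n : ℕ) (t : ℕ → α) (s : ℕ → β) (f : α → γ) (g : β → γ)
    (x : β) (y : α) : Prop :=
  ∃ i < n, x ∈ Icc (s i) (s (i + 1)) ∧ y ∈ Icc (t i) (t (i + 1)) ∧ f y = g x

namespace PieceMatch

variable {n : ℕ} {t : ℕ → α} {s : ℕ → β} {f : α → γ} {g : β → γ}

theorem symm [Preorder α] [Preorder β] {x : β} {y : α} (h : PieceMatch n t s f g x y) :
    PieceMatch n s t g f y x :=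
  let ⟨i, hi, hx, hy, e⟩ := h
  ⟨i, hi, hy, hx, e.symm⟩

theorem of_le [Preorder α] [Preorder β] {i : ℕ} (hn : 0 < n) (ht : MonotoneOn t (Iic n))
    (hs : MonotoneOn s (Iic n)) (hmatch : ∀ i ≤ n, f (t i) = g (s i)) (hi : i ≤ n) :
    PieceMatch n t s f g (s i) (t i) := by
  rcases hi.lt_or_eq with hi | rfl
  · exact ⟨i, hi, left_mem_Icc.2 (hs.apply_le_succ_of_lt hi),
      left_mem_Icc.2 (ht.apply_le_succ_of_lt hi), hmatch i hi.le⟩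
  · obtain ⟨m, rfl⟩ := Nat.exists_eq_succ_of_ne_zero hn.ne'
    exact ⟨m, m.lt_succ_self,
      right_mem_Icc.2 (hs.apply_le_succ_of_lt m.lt_succ_self),
      right_mem_Icc.2 (ht.apply_le_succ_of_lt m.lt_succ_self), hmatch _ le_rfl⟩

theorem lt_of_lt [LinearOrder α] [LinearOrder β] [Preorder γ] {x₁ x₂ : β} {y₁ y₂ : α}
    (hs : MonotoneOn s (Iic n)) (ht : StrictMonoOn t (Iic n))
    (hmatch : ∀ i ≤ n, f (t i) = g (s i))
    (hdir : ∀ i < n,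
      SameStrictMonotonicity f (Icc (t i) (t (i + 1))) g (Icc (s i) (s (i + 1))))
    (h₁ : PieceMatch n t s f g x₁ y₁) (h₂ : PieceMatch n t s f g x₂ y₂) (hx : x₁ < x₂) :
    y₁ < y₂ := by
  obtain ⟨i, hi, hx₁, hy₁, e₁⟩ := h₁
  obtain ⟨j, hj, hx₂, hy₂, e₂⟩ := h₂
  rcases lt_trichotomy i j with hij | rfl | hji
  · -- `x₁ ≤ s (i+1) ≤ s j ≤ x₂`, and one of these steps is strict
    have hsij : s (i + 1) ≤ s j := hs (mem_Iic.2 hi) (mem_Iic.2 hj.le) hij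
    have htij : t (i + 1) ≤ t j := ht.monotoneOn (mem_Iic.2 hi) (mem_Iic.2 hj.le) hij
    rcases hx₁.2.lt_or_eq with h | h
    · have := (hdir i hi).lt_of_lt hy₁ (right_mem_Icc.2 (ht.monotoneOn.apply_le_succ_of_lt hi))
        hx₁ (right_mem_Icc.2 (hs.apply_le_succ_of_lt hi)) e₁ (hmatch (i + 1) hi) h
      exact this.trans_le (htij.trans hy₂.1)
    rcases hsij.lt_or_eq with h' | h'
    · have hij' : i + 1 < j := lt_of_not_ge fun hle => h'.not_ge (hs (mem_Iic.2 hj.le)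
        (mem_Iic.2 hi) hle)
      exact hy₁.2.trans_lt ((ht (mem_Iic.2 hi) (mem_Iic.2 hj.le) hij').trans_le hy₂.1)
    · have := (hdir j hj).lt_of_lt (left_mem_Icc.2 (ht.monotoneOn.apply_le_succ_of_lt hj)) hy₂
        (left_mem_Icc.2 (hs.apply_le_succ_of_lt hj)) hx₂ (hmatch j hj.le) e₂
        (by rw [← h', ← h]; exact hx)
      exact hy₁.2.trans htij |>.trans_lt this
  · exact (hdir i hi).lt_of_lt hy₁ hy₂ hx₁ hx₂ e₁ e₂ hx
  · have : x₂ ≤ x₁ := hx₂.2.trans ((hs (mem_Iic.2 hj) (mem_Iic.2 hi.le) hji).trans hx₁.1)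
    exact absurd hx this.not_gt

theorem lt_iff_lt [LinearOrder α] [LinearOrder β] [Preorder γ] {x₁ x₂ : β} {y₁ y₂ : α}
    (hs : StrictMonoOn s (Iic n)) (ht : StrictMonoOn t (Iic n))
    (hmatch : ∀ i ≤ n, f (t i) = g (s i))
    (hdir : ∀ i < n,
      SameStrictMonotonicity f (Icc (t i) (t (i + 1))) g (Icc (s i) (s (i + 1))))
    (h₁ : PieceMatch n t s f g x₁ y₁) (h₂ : PieceMatch n t s f g x₂ y₂) : x₁ < x₂ ↔ y₁ < y₂ :=
  ⟨lt_of_lt hs.monotoneOn ht hmatch hdir h₁ h₂,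
    lt_of_lt ht.monotoneOn hs (fun i hi => (hmatch i hi).symm) (fun i hi => (hdir i hi).symm)
      h₁.symm h₂.symm⟩

theorem exists_right_of_mem_Icc [ConditionallyCompleteLinearOrder α] [TopologicalSpace α]
    [OrderTopology α] [DenselyOrdered α] [LinearOrder β]
    [LinearOrder γ] [TopologicalSpace γ] [OrderClosedTopology γ] {x : β}
    (hn : 0 < n) (ht : MonotoneOn t (Iic n))
    (hf : ∀ i < n, ContinuousOn f (Icc (t i) (t (i + 1))))
    (hg : ∀ i < n, MonotoneOn g (Icc (s i) (s (i + 1))) ∨ AntitoneOn g (Icc (s i) (s (i + 1))))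
    (hmatch : ∀ i ≤ n, f (t i) = g (s i)) (hx : x ∈ Icc (s 0) (s n)) :
    ∃ y ∈ Icc (t 0) (t n), PieceMatch n t s f g x y := by
  obtain ⟨i, hi, hxi⟩ := exists_lt_mem_Icc_succ hn hx
  obtain ⟨y, hy, e⟩ := exists_eq_of_mem_Icc (ht.apply_le_succ_of_lt hi)
    (hf i hi) (hg i hi) (hmatch i hi.le) (hmatch (i + 1) hi) hxi
  exact ⟨y, Icc_subset_Icc_zero_of_le ht i.le_succ hi hy, i, hi, hxi, hy, e⟩

theorem exists_left_of_mem_Icc [LinearOrder α] [ConditionallyCompleteLinearOrder β]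
    [TopologicalSpace β] [OrderTopology β] [DenselyOrdered β]
    [LinearOrder γ] [TopologicalSpace γ] [OrderClosedTopology γ] {y : α}
    (hn : 0 < n) (hs : MonotoneOn s (Iic n))
    (hg : ∀ i < n, ContinuousOn g (Icc (s i) (s (i + 1))))
    (hf : ∀ i < n, MonotoneOn f (Icc (t i) (t (i + 1))) ∨ AntitoneOn f (Icc (t i) (t (i + 1))))
    (hmatch : ∀ i ≤ n, f (t i) = g (s i)) (hy : y ∈ Icc (t 0) (t n)) :
    ∃ x ∈ Icc (s 0) (s n), PieceMatch n t s f g x y :=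
  let ⟨x, hx, h⟩ := exists_right_of_mem_Icc hn hs hg hf (fun i hi => (hmatch i hi).symm) hy
  ⟨x, hx, h.symm⟩

end PieceMatch

theorem exists_reparametrization_interval_general
    (n : ℕ) (t s : ℕ → ℝ)
    (ht0 : t 0 = 0) (htn : t n = 1) (hs0 : s 0 = 0) (hsn : s n = 1)
    (htmono : ∀ i < n, t i < t (i + 1)) (hsmono : ∀ i < n, s i < s (i + 1))
    (f g : ℝ → ℝ)
    (hf : ContinuousOn f (Set.Icc 0 1)) (hg : ContinuousOn g (Set.Icc 0 1))
    (hfmono : ∀ i < n, StrictMonoOn f (Set.Icc (t i) (t (i + 1))) ∨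
      StrictAntiOn f (Set.Icc (t i) (t (i + 1))))
    (hgmono : ∀ i < n, StrictMonoOn g (Set.Icc (s i) (s (i + 1))) ∨
      StrictAntiOn g (Set.Icc (s i) (s (i + 1))))
    (hmatch : ∀ i ≤ n, f (t i) = g (s i)) :
    ∃ φ : ℝ → ℝ,
      StrictMonoOn φ (Set.Icc 0 1) ∧
      ContinuousOn φ (Set.Icc 0 1) ∧
      Set.BijOn φ (Set.Icc 0 1) (Set.Icc 0 1) ∧
      (∀ i ≤ n, φ (s i) = t i) ∧
      (∀ x ∈ Set.Icc (0 : ℝ) 1, f (φ x) = g x) := by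
  have hn : 0 < n := Nat.pos_of_ne_zero fun h => by subst h; linarith
  have ht := strictMonoOn_Iic_of_lt_succ htmono
  have hs := strictMonoOn_Iic_of_lt_succ hsmono
  have hdir i (hi : i < n) := sameStrictMonotonicity_Icc (htmono i hi) (hsmono i hi)
    (hfmono i hi) (hgmono i hi) (hmatch i hi.le) (hmatch (i + 1) hi)
  have hfc i (hi : i < n) : ContinuousOn f (Icc (t i) (t (i + 1))) :=
    hf.mono (ht0 ▸ htn ▸ Icc_subset_Icc_zero_of_le ht.monotoneOn i.le_succ hi)
  have hgc i (hi : i < n) : ContinuousOn g (Icc (s i) (s (i + 1))) :=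
    hg.mono (hs0 ▸ hsn ▸ Icc_subset_Icc_zero_of_le hs.monotoneOn i.le_succ hi)
  have hfm i (hi : i < n) := (hfmono i hi).imp StrictMonoOn.monotoneOn StrictAntiOn.antitoneOn
  have hgm i (hi : i < n) := (hgmono i hi).imp StrictMonoOn.monotoneOn StrictAntiOn.antitoneOn
  obtain ⟨φ, hφ, hbij, hgraph⟩ := exists_strictMonoOn_bijOn_of_rel
    (R := PieceMatch n t s f g) (A := Icc 0 1) (B := Icc 0 1)
    (fun _ _ _ _ => PieceMatch.lt_iff_lt hs ht hmatch hdir)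
    (fun _ hx => ht0 ▸ htn ▸
      PieceMatch.exists_right_of_mem_Icc hn ht.monotoneOn hfc hgm hmatch (hs0 ▸ hsn ▸ hx))
    (fun _ hy => hs0 ▸ hsn ▸
      PieceMatch.exists_left_of_mem_Icc hn hs.monotoneOn hgc hfm hmatch (ht0 ▸ htn ▸ hy))
  refine ⟨φ, hφ, hφ.continuousOn_of_surjOn hbij.mapsTo hbij.surjOn, hbij, fun i hi => ?_,
    fun x hx => ?_⟩
  · exact (hgraph _ (hs0 ▸ hsn ▸ Icc_subset_Icc_zero_of_le hs.monotoneOn le_rfl hi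
      (left_mem_Icc.2 le_rfl)) _).1 (PieceMatch.of_le hn ht.monotoneOn hs.monotoneOn hmatch hi)
  · obtain ⟨_, _, _, _, e⟩ := (hgraph x hx _).2 rfl
    exact e

/-- Two continuous functions on `[0,1]`, piecewise strictly monotone with
respect to partitions of the same length and with matching values at the
partition points, differ by precomposition with a strictly increasing
homeomorphism of `[0,1]` matching the partitions. -/
theorem exists_reparametrization_interval
    (n : ℕ) (hn : 1 ≤ n) (t s : ℕ → ℝ)
    (ht0 : t 0 = 0) (htn : t n = 1) (hs0 : s 0 = 0) (hsn : s n = 1)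
    (htmono : ∀ i < n, t i < t (i + 1)) (hsmono : ∀ i < n, s i < s (i + 1))
    (f g : ℝ → ℝ)
    (hf : ContinuousOn f (Set.Icc 0 1)) (hg : ContinuousOn g (Set.Icc 0 1))
    (hfmono : ∀ i < n, StrictMonoOn f (Set.Icc (t i) (t (i + 1))) ∨
      StrictAntiOn f (Set.Icc (t i) (t (i + 1))))
    (hgmono : ∀ i < n, StrictMonoOn g (Set.Icc (s i) (s (i + 1))) ∨
      StrictAntiOn g (Set.Icc (s i) (s (i + 1))))
    (hmatch : ∀ i ≤ n, f (t i) = g (s i)) :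
    ∃ φ : ℝ → ℝ,
      StrictMonoOn φ (Set.Icc 0 1) ∧
      ContinuousOn φ (Set.Icc 0 1) ∧
      Set.BijOn φ (Set.Icc 0 1) (Set.Icc 0 1) ∧
      (∀ i ≤ n, φ (s i) = t i) ∧
      (∀ x ∈ Set.Icc (0 : ℝ) 1, f (φ x) = g x) :=
  exists_reparametrization_interval_general n t s ht0 htn hs0 hsn htmono hsmono f g hf hg hfmono
    hgmono hmatch
end

section
/- Let n ≥ 1, let 0 = t₀ < t₁ < ⋯ < t_n = 1 be a partition of [0,1], and let f : [0,1] → ℝ be continuous and strictly monotone on each subinterval [t_{i−1}, t_i]. If φ : [0,1] → [0,1] is a strictly increasing continuous bijection with f ∘ φ = f, then φ is the identity map of [0,1]. -/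
/-!
If `φ` moved some point `c`, let `b` be the last fixed point of `φ` below `c` (fixed points form a
closed set containing `0`). `b` lies in a piece `[tᵢ, tᵢ₊₁)` on which `f` is injective. For `z`
slightly larger than `b`, monotonicity and continuity of `φ` at `b` put both `z` and `φ z` in that
piece, so `f (φ z) = f z` forces `φ z = z`, contradicting the choice of `b`.
-/

open Set Filter Topology Function

theorem MonotoneOn.isFixedPt_left_of_surjOn {α : Type*} [PartialOrder α] {φ : α → α} {a b : α}
    (hab : a ≤ b) (hφ : MonotoneOn φ (Icc a b)) (hmaps : MapsTo φ (Icc a b) (Icc a b))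
    (hsurj : SurjOn φ (Icc a b) (Icc a b)) : IsFixedPt φ a := by
  obtain ⟨y, hy, hya⟩ := hsurj (left_mem_Icc.2 hab)
  exact le_antisymm (hya ▸ hφ (left_mem_Icc.2 hab) hy hy.1) (hmaps (left_mem_Icc.2 hab)).1

theorem exists_isFixedPt_forall_Ioc_not_isFixedPt {α : Type*} [ConditionallyCompleteLinearOrder α]
    [TopologicalSpace α] [OrderTopology α] {φ : α → α} {a c : α} (hac : a ≤ c)
    (hφ : ContinuousOn φ (Icc a c)) (ha : IsFixedPt φ a) (hc : ¬IsFixedPt φ c) :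
    ∃ b ∈ Ico a c, IsFixedPt φ b ∧ ∀ z ∈ Ioc b c, ¬IsFixedPt φ z := by
  set S := Icc a c ∩ (fun z ↦ (φ z, z)) ⁻¹' diagonal α
  have hS : IsClosed S :=
    (hφ.prodMk continuousOn_id).preimage_isClosed_of_isClosed isClosed_Icc isClosed_diagonal
  have hbdd : BddAbove S := ⟨c, fun z hz ↦ hz.1.2⟩
  obtain ⟨⟨hab, hbc⟩, hb⟩ := hS.csSup_mem ⟨a, left_mem_Icc.2 hac, ha⟩ hbdd
  refine ⟨sSup S, ⟨hab, hbc.lt_of_ne fun h ↦ hc (h ▸ hb)⟩, hb, fun z hz hfix ↦ ?_⟩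
  exact (le_csSup hbdd ⟨⟨hab.trans hz.1.le, hz.2⟩, hfix⟩).not_gt hz.1

theorem eventually_isFixedPt_nhdsGT {α β : Type*} [LinearOrder α] [TopologicalSpace α]
    [OrderTopology α] {φ : α → α} {f : α → β} {b u : α} (hbu : b < u)
    (hφcont : ContinuousOn φ (Icc b u)) (hφmono : MonotoneOn φ (Icc b u)) (hb : IsFixedPt φ b)
    (hf : InjOn f (Icc b u)) (hcomp : ∀ z ∈ Icc b u, f (φ z) = f z) :
    ∀ᶠ z in 𝓝[>] b, IsFixedPt φ z := by
  have hIcc : Icc b u ∈ 𝓝[>] b := mem_of_superset (Ioo_mem_nhdsGT hbu) Ioo_subset_Icc_self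
  have hφlt : ∀ᶠ z in 𝓝[>] b, φ z < u := by
    have hφb : Tendsto φ (𝓝[>] b) (𝓝 (φ b)) :=
      (hφcont b (left_mem_Icc.2 hbu.le)).tendsto.mono_left (nhdsWithin_le_of_mem hIcc)
    exact hφb.eventually (eventually_lt_nhds (hb.eq.symm ▸ hbu))
  filter_upwards [hIcc, hφlt] with z hz hφz
  have hbφz : b ≤ φ z := hb.eq ▸ hφmono (left_mem_Icc.2 hbu.le) hz hz.1
  exact hf ⟨hbφz, hφz.le⟩ hz (hcomp z hz)

theorem stabilizer_trivial_interval_general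
    (n : ℕ) (t : ℕ → ℝ)
    (ht0 : t 0 = 0) (htn : t n = 1)
    (f : ℝ → ℝ)
    (hfmono : ∀ i < n, StrictMonoOn f (Set.Icc (t i) (t (i + 1))) ∨
      StrictAntiOn f (Set.Icc (t i) (t (i + 1))))
    (φ : ℝ → ℝ)
    (hφmono : StrictMonoOn φ (Set.Icc 0 1))
    (hφcont : ContinuousOn φ (Set.Icc 0 1))
    (hφbij : Set.BijOn φ (Set.Icc 0 1) (Set.Icc 0 1))
    (hcomp : ∀ x ∈ Set.Icc (0 : ℝ) 1, f (φ x) = f x) :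
    ∀ x ∈ Set.Icc (0 : ℝ) 1, φ x = x := by
  intro c hc
  by_contra hne
  have h0 : IsFixedPt φ 0 :=
    hφmono.monotoneOn.isFixedPt_left_of_surjOn zero_le_one hφbij.mapsTo hφbij.surjOn
  obtain ⟨b, ⟨hb0, hbc⟩, hb, hfree⟩ := exists_isFixedPt_forall_Ioc_not_isFixedPt hc.1
    (hφcont.mono (Icc_subset_Icc_right hc.2)) h0 hne
  obtain ⟨i, hi, hbi⟩ :=
    mem_iUnion₂.1 (Ico_subset_biUnion_Ico n t ⟨ht0 ▸ hb0, htn ▸ hbc.trans_le hc.2⟩)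
  have hsub : Icc b (min c (t (i + 1))) ⊆ Icc 0 1 :=
    Icc_subset_Icc hb0 ((min_le_left _ _).trans hc.2)
  have hinj : InjOn f (Icc b (min c (t (i + 1)))) :=
    ((hfmono i (Finset.mem_range.1 hi)).elim StrictMonoOn.injOn StrictAntiOn.injOn).mono
      (Icc_subset_Icc hbi.1 (min_le_right _ _))
  have hfix := eventually_isFixedPt_nhdsGT (lt_min hbc hbi.2) (hφcont.mono hsub)
    (hφmono.monotoneOn.mono hsub) hb hinj fun z hz ↦ hcomp z (hsub hz)
  obtain ⟨z, hz, hzc⟩ := (hfix.and (Ioo_mem_nhdsGT hbc)).exists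
  exact hfree z (Ioo_subset_Ioc_self hzc) hz

/-- A strictly increasing continuous self-bijection of `[0,1]` stabilizing a
piecewise strictly monotone continuous function is the identity. -/
theorem stabilizer_trivial_interval
    (n : ℕ) (hn : 1 ≤ n) (t : ℕ → ℝ)
    (ht0 : t 0 = 0) (htn : t n = 1)
    (htmono : ∀ i < n, t i < t (i + 1))
    (f : ℝ → ℝ) (hf : ContinuousOn f (Set.Icc 0 1))
    (hfmono : ∀ i < n, StrictMonoOn f (Set.Icc (t i) (t (i + 1))) ∨
      StrictAntiOn f (Set.Icc (t i) (t (i + 1))))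
    (φ : ℝ → ℝ)
    (hφmono : StrictMonoOn φ (Set.Icc 0 1))
    (hφcont : ContinuousOn φ (Set.Icc 0 1))
    (hφbij : Set.BijOn φ (Set.Icc 0 1) (Set.Icc 0 1))
    (hcomp : ∀ x ∈ Set.Icc (0 : ℝ) 1, f (φ x) = f x) :
    ∀ x ∈ Set.Icc (0 : ℝ) 1, φ x = x :=
  stabilizer_trivial_interval_general n t ht0 htn f hfmono φ hφmono hφcont hφbij hcomp
end

section
/- Let n ≥ 1, let f, g : ℝ → ℝ be continuous 1-periodic functions (f(x+1) = f(x) and g(x+1) = g(x) for all x), and let t₀ < t₁ < ⋯ < t_n = t₀ + 1 and s₀ < s₁ < ⋯ < s_n = s₀ + 1 be real numbers such that for each i ∈ {1,…,n}, f is strictly monotone on [t_{i−1}, t_i] and g is strictly monotone on [s_{i−1}, s_i], and f(t_i) = g(s_i) for all i ∈ {0,…,n}. Then there exists a strictly increasing continuous bijection φ : ℝ → ℝ with φ(x+1) = φ(x) + 1 for all x, φ(s_i) = t_i for all i, and f(φ(x)) = g(x) for all x ∈ ℝ. -/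
/-!
On each interval `[s i, s (i + 1)]` the map `f⁻¹ ∘ g`, with `f` inverted on `[t i, t (i + 1)]`,
is an increasing bijection onto `[t i, t (i + 1)]`: both restrictions are monotone in the same
sense because their endpoint values agree, and they are onto the same interval of values by the
intermediate value theorem. These pieces agree at the partition points, so they glue to an
increasing bijection `ψ : [s 0, s 0 + 1] → [t 0, t 0 + 1]` with `f ∘ ψ = g`. Since
`ψ (s 0 + 1) = ψ (s 0) + 1`, it extends to a lift `φ` with `φ (x + 1) = φ x + 1`, and periodicity
of `f` and `g` propagates `f ∘ φ = g` to all of `ℝ`. A monotone surjection of `ℝ` is continuous.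
-/

open Set Function

section Reparametrization

variable {α β γ : Type*} [LinearOrder α] [LinearOrder β]

structure IsReparamOn (f : β → γ) (g : α → γ) (ψ : α → β) (s : Set α) (t : Set β) : Prop where
  strictMonoOn : StrictMonoOn ψ s
  bijOn : BijOn ψ s t
  comp_eqOn : EqOn (f ∘ ψ) g s

variable {f : β → γ} {g : α → γ} {ψ ψ' : α → β} {s s' : Set α} {t t' : Set β}

namespace IsReparamOn

theorem congr (h : IsReparamOn f g ψ s t) (hψ : EqOn ψ ψ' s) : IsReparamOn f g ψ' s t where
  strictMonoOn := h.strictMonoOn.congr hψ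
  bijOn := h.bijOn.congr hψ
  comp_eqOn x hx := by simp only [comp_apply, ← hψ hx]; exact h.comp_eqOn hx

theorem union (h : IsReparamOn f g ψ s t) (h' : IsReparamOn f g ψ s' t') {c : α}
    (hs : IsGreatest s c) (hs' : IsLeast s' c) : IsReparamOn f g ψ (s ∪ s') (t ∪ t') := by
  have hmono := h.strictMonoOn.union h'.strictMonoOn hs hs'
  exact ⟨hmono, h.bijOn.union h'.bijOn hmono.injOn, h.comp_eqOn.union h'.comp_eqOn⟩

variable {a b : β} {c d : α}

theorem apply_left (h : IsReparamOn f g ψ (Icc c d) (Icc a b)) (hcd : c ≤ d) : ψ c = a := by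
  have hc : c ∈ Icc c d := left_mem_Icc.2 hcd
  have hψc := h.bijOn.mapsTo hc
  obtain ⟨y, hy, hψy⟩ := h.bijOn.surjOn (left_mem_Icc.2 (hψc.1.trans hψc.2))
  exact le_antisymm (hψy ▸ h.strictMonoOn.monotoneOn hc hy hy.1) hψc.1

theorem apply_right (h : IsReparamOn f g ψ (Icc c d) (Icc a b)) (hcd : c ≤ d) : ψ d = b := by
  have hd : d ∈ Icc c d := right_mem_Icc.2 hcd
  have hψd := h.bijOn.mapsTo hd
  obtain ⟨y, hy, hψy⟩ := h.bijOn.surjOn (right_mem_Icc.2 (hψd.1.trans hψd.2))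
  exact le_antisymm hψd.2 (hψy ▸ h.strictMonoOn.monotoneOn hy hd hy.2)

theorem ite_Icc {ψ₁ ψ₂ : α → β} {e : α} {b' : β}
    (h₁ : IsReparamOn f g ψ₁ (Icc c d) (Icc a b)) (h₂ : IsReparamOn f g ψ₂ (Icc d e) (Icc b b'))
    (hcd : c ≤ d) (hde : d ≤ e) :
    IsReparamOn f g (fun x ↦ if x ≤ d then ψ₁ x else ψ₂ x) (Icc c e) (Icc a b') := by
  have hab : a ≤ b := h₁.apply_left hcd ▸ h₁.apply_right hcd ▸ h₁.strictMonoOn.monotoneOn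
    (left_mem_Icc.2 hcd) (right_mem_Icc.2 hcd) hcd
  have hbb' : b ≤ b' := h₂.apply_left hde ▸ h₂.apply_right hde ▸ h₂.strictMonoOn.monotoneOn
    (left_mem_Icc.2 hde) (right_mem_Icc.2 hde) hde
  have h₁' := h₁.congr (ψ' := fun x ↦ if x ≤ d then ψ₁ x else ψ₂ x) fun x hx ↦ by
    simp [hx.2]
  have h₂' := h₂.congr (ψ' := fun x ↦ if x ≤ d then ψ₁ x else ψ₂ x) fun x hx ↦ by
    rcases hx.1.eq_or_lt with rfl | hlt
    · simp [h₁.apply_right hcd, h₂.apply_left hde]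
    · simp [not_le.2 hlt]
  rw [← Icc_union_Icc_eq_Icc hcd hde, ← Icc_union_Icc_eq_Icc hab hbb']
  exact h₁'.union h₂' (isGreatest_Icc hcd) (isLeast_Icc hde)

end IsReparamOn

theorem isReparamOn_invFunOn_comp [Nonempty β] {u : Set γ} [Preorder γ] (hf : BijOn f t u)
    (hg : BijOn g s u) (hfm : StrictMonoOn f t) (hgm : StrictMonoOn g s) :
    IsReparamOn f g (invFunOn f t ∘ g) s t := by
  have hcomp : EqOn (f ∘ invFunOn f t ∘ g) g s := fun x hx ↦
    hf.surjOn.rightInvOn_invFunOn (hg.mapsTo hx)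
  have hbij : BijOn (invFunOn f t ∘ g) s t := (BijOn.symm hf.invOn_invFunOn.symm hf).comp hg
  refine ⟨fun x hx y hy hxy ↦ ?_, hbij, hcomp⟩
  refine (hfm.lt_iff_lt (hbij.mapsTo hx) (hbij.mapsTo hy)).1 ?_
  have hgxy := hgm hx hy hxy
  rwa [← hcomp hx, ← hcomp hy] at hgxy

end Reparametrization

theorem exists_isReparamOn_Icc_of_forall_lt {α β γ : Type*} [LinearOrder α] [LinearOrder β]
    {f : β → γ} {g : α → γ} {s : ℕ → α} {t : ℕ → β} {n : ℕ}
    (hs : ∀ i < n, s i < s (i + 1)) (h₀ : f (t 0) = g (s 0))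
    (hpiece : ∀ i < n, ∃ ψ, IsReparamOn f g ψ (Icc (s i) (s (i + 1))) (Icc (t i) (t (i + 1)))) :
    ∃ ψ, IsReparamOn f g ψ (Icc (s 0) (s n)) (Icc (t 0) (t n)) ∧ ∀ i ≤ n, ψ (s i) = t i := by
  induction n with
  | zero =>
    refine ⟨fun _ ↦ t 0, ?_, fun i hi ↦ by rw [Nat.le_zero.1 hi]⟩
    simpa only [Icc_self] using
      ⟨strictMonoOn_singleton _, bijOn_singleton.2 rfl, eqOn_singleton.2 h₀⟩
  | succ k ih =>
    obtain ⟨ψ, hψ, hψs⟩ := ih (fun i hi ↦ hs i (by omega)) (fun i hi ↦ hpiece i (by omega))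
    obtain ⟨ψ', hψ'⟩ := hpiece k k.lt_succ_self
    have hsk : s k < s (k + 1) := hs k k.lt_succ_self
    have hsmono : MonotoneOn s (Iic k) :=
      (strictMonoOn_Iic_of_lt_succ fun i hi ↦ hs i (by omega)).monotoneOn
    refine ⟨_, hψ.ite_Icc hψ' (hsmono k.zero_le self_mem_Iic k.zero_le) hsk.le, fun i hi ↦ ?_⟩
    rcases Nat.le_succ_iff.1 hi with hik | rfl
    · simp only [hsmono hik self_mem_Iic hik, if_true, hψs i hik]
    · simp only [not_le.2 hsk, if_false, hψ'.apply_right hsk.le]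

section Pieces

variable {α β δ : Type*}
  [ConditionallyCompleteLinearOrder α] [TopologicalSpace α] [OrderTopology α] [DenselyOrdered α]
  [ConditionallyCompleteLinearOrder β] [TopologicalSpace β] [OrderTopology β] [DenselyOrdered β]
  [LinearOrder δ] [TopologicalSpace δ] [OrderClosedTopology δ]
  {f : β → δ} {g : α → δ} {a b : β} {c d : α}

theorem StrictMonoOn.bijOn_Icc (hg : StrictMonoOn g (Icc c d)) (hgc : ContinuousOn g (Icc c d))
    (hcd : c ≤ d) : BijOn g (Icc c d) (Icc (g c) (g d)) :=
  ⟨hg.monotoneOn.mapsTo_Icc, hg.injOn, hgc.surjOn_Icc (left_mem_Icc.2 hcd) (right_mem_Icc.2 hcd)⟩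

theorem exists_isReparamOn_Icc_of_strictMonoOn (hab : a ≤ b) (hcd : c ≤ d)
    (hfc : ContinuousOn f (Icc a b)) (hgc : ContinuousOn g (Icc c d))
    (hf : StrictMonoOn f (Icc a b)) (hg : StrictMonoOn g (Icc c d))
    (hac : f a = g c) (hbd : f b = g d) : ∃ ψ, IsReparamOn f g ψ (Icc c d) (Icc a b) := by
  have : Nonempty β := ⟨a⟩
  have hgbij := hg.bijOn_Icc hgc hcd
  rw [← hac, ← hbd] at hgbij
  exact ⟨_, isReparamOn_invFunOn_comp (hf.bijOn_Icc hfc hab) hgbij hf hg⟩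

theorem exists_isReparamOn_Icc (hab : a < b) (hcd : c < d)
    (hfc : ContinuousOn f (Icc a b)) (hgc : ContinuousOn g (Icc c d))
    (hf : StrictMonoOn f (Icc a b) ∨ StrictAntiOn f (Icc a b))
    (hg : StrictMonoOn g (Icc c d) ∨ StrictAntiOn g (Icc c d))
    (hac : f a = g c) (hbd : f b = g d) : ∃ ψ, IsReparamOn f g ψ (Icc c d) (Icc a b) := by
  have ha := left_mem_Icc.2 hab.le
  have hb := right_mem_Icc.2 hab.le
  have hc := left_mem_Icc.2 hcd.le
  have hd := right_mem_Icc.2 hcd.le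
  rcases hf with hf | hf <;> rcases hg with hg | hg
  · exact exists_isReparamOn_Icc_of_strictMonoOn hab.le hcd.le hfc hgc hf hg hac hbd
  · exact absurd (hac ▸ hbd ▸ hf ha hb hab) (hg hc hd hcd).asymm
  · exact absurd (hac ▸ hbd ▸ hf ha hb hab) (hg hc hd hcd).asymm
  · obtain ⟨ψ, hψ⟩ := exists_isReparamOn_Icc_of_strictMonoOn hab.le hcd.le
      (continuous_toDual.comp_continuousOn hfc) (continuous_toDual.comp_continuousOn hgc)
      hf.dual_right hg.dual_right (congrArg OrderDual.toDual hac) (congrArg OrderDual.toDual hbd)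
    exact ⟨ψ, hψ.strictMonoOn, hψ.bijOn, fun x hx ↦ OrderDual.toDual.injective (hψ.comp_eqOn hx)⟩

end Pieces

section Deg1Extend

/-- The extension of `ψ` from `[c, c + 1)` to `ℝ` that commutes with integer translations. -/
noncomputable def deg1Extend (c : ℝ) (ψ : ℝ → ℝ) (x : ℝ) : ℝ :=
  ψ (x - ⌊x - c⌋) + ⌊x - c⌋

variable {c : ℝ} {ψ : ℝ → ℝ}

theorem sub_floor_sub_mem_Ico (x c : ℝ) : x - ⌊x - c⌋ ∈ Ico c (c + 1) := by
  constructor <;> linarith [Int.floor_le (x - c), Int.lt_floor_add_one (x - c)]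

theorem deg1Extend_add_intCast (x : ℝ) (m : ℤ) :
    deg1Extend c ψ (x + m) = deg1Extend c ψ x + m := by
  have hfloor : ⌊x + m - c⌋ = ⌊x - c⌋ + m := by
    rw [add_sub_right_comm, Int.floor_add_intCast]
  simp only [deg1Extend, hfloor, Int.cast_add, add_sub_add_right_eq_sub]
  ring

theorem deg1Extend_add_one (x : ℝ) : deg1Extend c ψ (x + 1) = deg1Extend c ψ x + 1 := by
  exact_mod_cast deg1Extend_add_intCast (c := c) (ψ := ψ) x 1

theorem deg1Extend_of_mem_Ico {x : ℝ} (hx : x ∈ Ico c (c + 1)) : deg1Extend c ψ x = ψ x := by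
  have hfloor : ⌊x - c⌋ = 0 := Int.floor_eq_zero_iff.2 ⟨by linarith [hx.1], by linarith [hx.2]⟩
  simp [deg1Extend, hfloor]

theorem eqOn_deg1Extend (hψ : ψ (c + 1) = ψ c + 1) : EqOn (deg1Extend c ψ) ψ (Icc c (c + 1)) := by
  intro x hx
  rcases hx.2.lt_or_eq with hlt | rfl
  · exact deg1Extend_of_mem_Ico ⟨hx.1, hlt⟩
  · rw [deg1Extend_add_one, deg1Extend_of_mem_Ico ⟨le_rfl, lt_add_one c⟩, hψ]

theorem strictMono_deg1Extend (hmono : StrictMonoOn ψ (Icc c (c + 1)))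
    (hψ : ψ (c + 1) = ψ c + 1) : StrictMono (deg1Extend c ψ) := by
  intro x y hxy
  have hx := Ico_subset_Icc_self (sub_floor_sub_mem_Ico x c)
  have hy := Ico_subset_Icc_self (sub_floor_sub_mem_Ico y c)
  have hc : c ∈ Icc c (c + 1) := left_mem_Icc.2 (by linarith)
  have hc' : c + 1 ∈ Icc c (c + 1) := right_mem_Icc.2 (by linarith)
  rcases (Int.floor_le_floor (sub_le_sub_right hxy.le c)).lt_or_eq with hlt | heq
  · -- on distinct periods, both values are compared with `ψ (c + 1) + ⌊x - c⌋`
    have hstep : ((⌊x - c⌋ : ℤ) : ℝ) + 1 ≤ ⌊y - c⌋ := by exact_mod_cast hlt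
    have hxc := hmono hx hc' (sub_floor_sub_mem_Ico x c).2
    have hcy := hmono.monotoneOn hc hy hy.1
    simp only [deg1Extend]
    linarith
  · have hy' : y - ⌊x - c⌋ ∈ Icc c (c + 1) := heq ▸ hy
    have hψxy := hmono hx hy' (by linarith)
    simp only [deg1Extend, ← heq]
    linarith

theorem surjective_deg1Extend {a : ℝ} (hψ : ψ (c + 1) = ψ c + 1)
    (hsurj : SurjOn ψ (Icc c (c + 1)) (Icc a (a + 1))) : Surjective (deg1Extend c ψ) := by
  intro z
  obtain ⟨u, hu, hψu⟩ := hsurj (Ico_subset_Icc_self (sub_floor_sub_mem_Ico z a))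
  exact ⟨u + ⌊z - a⌋, by rw [deg1Extend_add_intCast, eqOn_deg1Extend hψ hu, hψu, sub_add_cancel]⟩

theorem comp_deg1Extend {f g : ℝ → ℝ} (hf : Periodic f 1) (hg : Periodic g 1)
    (h : EqOn (f ∘ ψ) g (Ico c (c + 1))) : f ∘ deg1Extend c ψ = g := by
  funext x
  calc f (ψ (x - ⌊x - c⌋) + ⌊x - c⌋) = f (ψ (x - ⌊x - c⌋)) := by
        simpa using hf.int_mul ⌊x - c⌋ (ψ (x - ⌊x - c⌋))
    _ = g (x - ⌊x - c⌋) := h (sub_floor_sub_mem_Ico x c)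
    _ = g x := by simpa using hg.sub_int_mul_eq ⌊x - c⌋

end Deg1Extend

theorem exists_reparametrization_circle_general
    (n : ℕ) (f g : ℝ → ℝ)
    (hfc : Continuous f) (hgc : Continuous g)
    (hfper : ∀ x, f (x + 1) = f x) (hgper : ∀ x, g (x + 1) = g x)
    (t s : ℕ → ℝ)
    (htmono : ∀ i < n, t i < t (i + 1)) (hsmono : ∀ i < n, s i < s (i + 1))
    (htper : t n = t 0 + 1) (hsper : s n = s 0 + 1)
    (hfmono : ∀ i < n, StrictMonoOn f (Set.Icc (t i) (t (i + 1))) ∨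
      StrictAntiOn f (Set.Icc (t i) (t (i + 1))))
    (hgmono : ∀ i < n, StrictMonoOn g (Set.Icc (s i) (s (i + 1))) ∨
      StrictAntiOn g (Set.Icc (s i) (s (i + 1))))
    (hmatch : ∀ i ≤ n, f (t i) = g (s i)) :
    ∃ φ : ℝ → ℝ,
      StrictMono φ ∧ Continuous φ ∧ Function.Bijective φ ∧
      (∀ x, φ (x + 1) = φ x + 1) ∧
      (∀ i ≤ n, φ (s i) = t i) ∧
      (∀ x, f (φ x) = g x) := by
  obtain ⟨ψ, hψ, hψs⟩ := exists_isReparamOn_Icc_of_forall_lt hsmono (hmatch 0 n.zero_le)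
    fun i hi ↦ exists_isReparamOn_Icc (htmono i hi) (hsmono i hi) hfc.continuousOn
      hgc.continuousOn (hfmono i hi) (hgmono i hi) (hmatch i hi.le) (hmatch (i + 1) hi)
  have hψ₁ : ψ (s 0 + 1) = ψ (s 0) + 1 := by
    rw [← hsper, hψs n le_rfl, hψs 0 n.zero_le, htper]
  rw [hsper, htper] at hψ
  have hφ := strictMono_deg1Extend hψ.strictMonoOn hψ₁
  have hφsurj := surjective_deg1Extend hψ₁ hψ.bijOn.surjOn
  have hφf := comp_deg1Extend hfper hgper (hψ.comp_eqOn.mono Ico_subset_Icc_self)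
  refine ⟨deg1Extend (s 0) ψ, hφ, hφ.monotone.continuous_of_surjective hφsurj,
    ⟨hφ.injective, hφsurj⟩, deg1Extend_add_one, fun i hi ↦ ?_, congrFun hφf⟩
  have hsi : s i ∈ Icc (s 0) (s 0 + 1) := by
    have hsmonoOn := (strictMonoOn_Iic_of_lt_succ hsmono).monotoneOn
    exact hsper ▸ ⟨hsmonoOn n.zero_le hi (Nat.zero_le i), hsmonoOn hi self_mem_Iic hi⟩
  rw [eqOn_deg1Extend hψ₁ hsi, hψs i hi]

/-- Two continuous `1`-periodic functions on `ℝ` (i.e. functions on the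
circle), piecewise strictly monotone with respect to partitions of a period of
the same length and with matching values at the partition points, differ by
precomposition with a strictly increasing homeomorphism of `ℝ` commuting with
translation by `1` (i.e. an orientation-preserving circle homeomorphism). -/
theorem exists_reparametrization_circle
    (n : ℕ) (hn : 1 ≤ n) (f g : ℝ → ℝ)
    (hfc : Continuous f) (hgc : Continuous g)
    (hfper : ∀ x, f (x + 1) = f x) (hgper : ∀ x, g (x + 1) = g x)
    (t s : ℕ → ℝ)
    (htmono : ∀ i < n, t i < t (i + 1)) (hsmono : ∀ i < n, s i < s (i + 1))
    (htper : t n = t 0 + 1) (hsper : s n = s 0 + 1)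
    (hfmono : ∀ i < n, StrictMonoOn f (Set.Icc (t i) (t (i + 1))) ∨
      StrictAntiOn f (Set.Icc (t i) (t (i + 1))))
    (hgmono : ∀ i < n, StrictMonoOn g (Set.Icc (s i) (s (i + 1))) ∨
      StrictAntiOn g (Set.Icc (s i) (s (i + 1))))
    (hmatch : ∀ i ≤ n, f (t i) = g (s i)) :
    ∃ φ : ℝ → ℝ,
      StrictMono φ ∧ Continuous φ ∧ Function.Bijective φ ∧
      (∀ x, φ (x + 1) = φ x + 1) ∧
      (∀ i ≤ n, φ (s i) = t i) ∧
      (∀ x, f (φ x) = g x) :=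
  exists_reparametrization_circle_general n f g hfc hgc hfper hgper t s htmono hsmono htper hsper
    hfmono hgmono hmatch
end
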